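/- arXiv:2212.04435 — 9 statements merged into one kernel-verified Lean document; each statement's English description precedes it below -/
import Mathlib

section
/- Let B be an integral domain and A an inert subring of B (i.e., whenever a, b ∈ B \ {0} satisfy ab ∈ A, then a ∈ A and b ∈ A). If B is a unique factorization domain, then A is a unique factorization domain. -/
/-!
Inertness makes the inclusion `A → B` a local homomorphism that reflects divisibility by
nonzero elements of `A`. Hence strict divisibility chains in `A` stay strict in `B` and so
terminate, and an irreducible element of `A` stays irreducible, hence prime, in the UFD `B`,
from where primality descends back to `A`.
-/

section LocalHom

variable {M N F : Type*} [CommMonoidWithZero M] [CommMonoidWithZero N] [FunLike F M N]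
  [MonoidWithZeroHomClass F M N] {f : F}

theorem DvdNotUnit.map_of_injective (hf : Function.Injective f) [IsLocalHom f] {a b : M}
    (h : DvdNotUnit a b) : DvdNotUnit (f a) (f b) := by
  obtain ⟨ha, x, hx, rfl⟩ := h
  exact ⟨(map_ne_zero_iff f hf).2 ha, f x, fun hfx => hx (hfx.of_map f x), map_mul f a x⟩

theorem WfDvdMonoid.of_injective_of_isLocalHom [WfDvdMonoid N] (hf : Function.Injective f)
    [IsLocalHom f] : WfDvdMonoid M :=
  ⟨Subrelation.wf (DvdNotUnit.map_of_injective hf) (InvImage.wf f wellFounded_dvdNotUnit)⟩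

end LocalHom

namespace Subring

variable {B : Type*} [CommRing B]

def IsInert (A : Subring B) : Prop :=
  ∀ a b : B, a ≠ 0 → b ≠ 0 → a * b ∈ A → a ∈ A ∧ b ∈ A

namespace IsInert

variable {A : Subring B} (hA : A.IsInert)
include hA

theorem isLocalHom_subtype [Nontrivial B] : IsLocalHom A.subtype where
  map_nonunit x := by
    rintro ⟨u, hu : (u : B) = x⟩
    have hx : (x : B) ≠ 0 := hu ▸ u.ne_zero
    have hxu : (x : B) * ↑u⁻¹ = 1 := by rw [← hu, Units.mul_inv]
    have hu' : (↑u⁻¹ : B) ∈ A := (hA x _ hx u⁻¹.ne_zero (hxu ▸ A.one_mem)).2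
    exact .of_mul_eq_one ⟨_, hu'⟩ (Subtype.ext hxu)

theorem coe_dvd_coe_iff {p x : A} (hp : p ≠ 0) : (p : B) ∣ x ↔ p ∣ x := by
  refine ⟨fun ⟨c, hc⟩ => ?_, map_dvd A.subtype⟩
  rcases eq_or_ne x 0 with rfl | hx
  · exact dvd_zero p
  have hc0 : c ≠ 0 := by rintro rfl; exact hx (by simpa using hc)
  have hcA : c ∈ A := (hA _ c (by exact_mod_cast hp) hc0 (hc ▸ x.2)).2
  exact ⟨⟨c, hcA⟩, Subtype.ext hc⟩

theorem irreducible_coe [Nontrivial B] {p : A} (hp : Irreducible p) : Irreducible (p : B) where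
  not_isUnit h := by
    have := hA.isLocalHom_subtype
    exact hp.not_isUnit (h.of_map A.subtype p)
  isUnit_or_isUnit := by
    intro a b hab
    have hp0 : (p : B) ≠ 0 := by exact_mod_cast hp.ne_zero
    obtain ⟨ha, hb⟩ := hA a b (left_ne_zero_of_mul (hab ▸ hp0)) (right_ne_zero_of_mul (hab ▸ hp0))
      (hab ▸ p.2)
    exact (hp.isUnit_or_isUnit (a := ⟨a, ha⟩) (b := ⟨b, hb⟩) (Subtype.ext hab)).imp
      (·.map A.subtype) (·.map A.subtype)

theorem prime_of_prime_coe {p : A} (hp : Prime (p : B)) : Prime p := by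
  have hp0 : p ≠ 0 := by rintro rfl; exact hp.ne_zero rfl
  refine ⟨hp0, fun h => hp.not_isUnit (h.map A.subtype), fun a b hab => ?_⟩
  simp only [← hA.coe_dvd_coe_iff hp0]
  exact hp.dvd_or_dvd (by exact_mod_cast map_dvd A.subtype hab)

end IsInert

end Subring

/-- If `A` is an inert subring of an integral domain `B` (nonzero `a, b` with `ab ∈ A`
satisfy `a, b ∈ A`) and `B` is a UFD, then `A` is a UFD. -/
theorem inert_subring_of_UFD_is_UFD {B : Type*} [CommRing B] [IsDomain B]
    [UniqueFactorizationMonoid B] (A : Subring B)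
    (hA : ∀ a b : B, a ≠ 0 → b ≠ 0 → a * b ∈ A → a ∈ A ∧ b ∈ A) :
    UniqueFactorizationMonoid A := by
  have hInert : A.IsInert := hA
  have := hInert.isLocalHom_subtype
  have : WfDvdMonoid A := .of_injective_of_isLocalHom A.subtype_injective
  exact { irreducible_iff_prime := fun {p} =>
    ⟨fun hp => hInert.prime_of_prime_coe (hInert.irreducible_coe hp).prime, Prime.irreducible⟩ }
end

section
/- Let B be an integral domain, A an inert subring of B, and S a multiplicatively closed subset of A not containing 0. Then S⁻¹A is an inert subring of S⁻¹B. -/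
/-- If `A` is an inert subring of an integral domain `B` and `S` is a multiplicatively
closed subset of `A` not containing `0`, then `S⁻¹A` is an inert subring of `S⁻¹B`. -/
theorem localization_of_inert_is_inert {B : Type*} [CommRing B] [IsDomain B]
    (A : Subring B) (hA : ∀ a b : B, a ≠ 0 → b ≠ 0 → a * b ∈ A → a ∈ A ∧ b ∈ A)
    (S : Submonoid A) (hS : (0 : A) ∉ S) :
    ∀ x y : Localization (S.map A.subtype), x ≠ 0 → y ≠ 0 →
      (∃ (a : B) (_ : a ∈ A) (s : S.map A.subtype), x * y = Localization.mk a s) →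
      (∃ (a : B) (_ : a ∈ A) (s : S.map A.subtype), x = Localization.mk a s) ∧
      (∃ (a : B) (_ : a ∈ A) (s : S.map A.subtype), y = Localization.mk a s) := by
  -- every element of S.map A.subtype is nonzero in B and lies in A
  have hSne : ∀ s : B, s ∈ S.map A.subtype → s ≠ 0 ∧ s ∈ A := by
    rintro s ⟨t, ht, rfl⟩
    refine ⟨?_, t.2⟩
    intro h
    apply hS
    have : t = 0 := Subtype.ext h
    rwa [this] at ht
  intro x y hx hy ⟨a, haA, u, hxy⟩
  obtain ⟨b, s, rfl⟩ : ∃ b s, x = Localization.mk b s := by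
    induction x using Localization.ind with
    | _ p => exact ⟨p.1, p.2, rfl⟩
  obtain ⟨c, t, rfl⟩ : ∃ c t, y = Localization.mk c t := by
    induction y using Localization.ind with
    | _ p => exact ⟨p.1, p.2, rfl⟩
  have hb : b ≠ 0 := by
    rintro rfl; exact hx (Localization.mk_zero s)
  have hc : c ≠ 0 := by
    rintro rfl; exact hy (Localization.mk_zero t)
  rw [Localization.mk_mul, Localization.mk_eq_mk_iff, Localization.r_iff_exists] at hxy
  obtain ⟨v, hv⟩ := hxy
  have hvne : (v : B) ≠ 0 := (hSne v v.2).1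
  have key : (b * c) * (u : B) = a * ((s : B) * t) := by
    have h2 := hv
    simp only [Submonoid.coe_mul] at h2
    have := mul_left_cancel₀ hvne h2
    linear_combination this
  -- b * c ∈ A
  have hune : (u : B) ≠ 0 := (hSne u u.2).1
  have hbc : b * c ≠ 0 := mul_ne_zero hb hc
  have hbcA : b * c ∈ A := by
    have hmem : (b * c) * (u : B) ∈ A := by
      rw [key]
      exact A.mul_mem haA (A.mul_mem (hSne s s.2).2 (hSne t t.2).2)
    exact (hA _ _ hbc hune hmem).1
  obtain ⟨hbA, hcA⟩ := hA _ _ hb hc hbcA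
  exact ⟨⟨b, hbA, s, rfl⟩, ⟨c, hcA, t, rfl⟩⟩
end

section
/- Let R be a commutative ring containing ℚ, B a commutative R-algebra, and D a locally nilpotent R-derivation on B with kernel A. If D has a slice s ∈ B (i.e., D(s) = 1), then B = A[s] and B is isomorphic as an A-algebra to the polynomial ring A[X] via X ↦ s. -/
set_option maxHeartbeats 1000000
set_option synthInstance.maxHeartbeats 200000

/-- The kernel of a derivation, as a subalgebra. -/
def Derivation.kerSubalgebra {R B : Type*} [CommRing R] [CommRing B] [Algebra R B]
    (D : Derivation R B B) : Subalgebra R B where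
  carrier := {b | D b = 0}
  mul_mem' := by
    intro a b ha hb
    simp only [Set.mem_setOf_eq] at *
    rw [D.leibniz]
    simp [ha, hb]
  add_mem' := by
    intro a b ha hb
    simp only [Set.mem_setOf_eq] at *
    simp [ha, hb]
  one_mem' := by simp [Set.mem_setOf_eq]
  zero_mem' := by simp [Set.mem_setOf_eq]
  algebraMap_mem' := fun r => D.map_algebraMap r

open Polynomial

section Aux
variable {R B : Type*} [CommRing R] [Algebra ℚ R] [CommRing B] [Algebra R B]

/-- The inverse of a natural number inside the kernel subalgebra. -/
noncomputable def invA (D : Derivation R B B) (n : ℕ) : D.kerSubalgebra :=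
  ⟨algebraMap R B (algebraMap ℚ R (1 / (n : ℚ))), D.map_algebraMap _⟩

omit [Algebra ℚ R] in
lemma natCast_coe (D : Derivation R B B) (n : ℕ) :
    ((n : D.kerSubalgebra) : B) = (n : B) := by
  push_cast; rfl

lemma invA_mul (D : Derivation R B B) (n : ℕ) (hn : n ≠ 0) (a : D.kerSubalgebra) :
    (n : D.kerSubalgebra) * (invA D n * a) = a := by
  apply Subtype.ext
  have h1 : ((n : ℚ) * (1 / (n : ℚ))) = 1 := by field_simp
  push_cast [invA]
  calc (n : B) * (algebraMap R B (algebraMap ℚ R (1 / (n : ℚ))) * (a : B))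
      = (algebraMap R B (algebraMap ℚ R (n : ℚ)) * algebraMap R B (algebraMap ℚ R (1 / (n : ℚ)))) * a := by
        rw [map_natCast, map_natCast]; ring
    _ = (a : B) := by rw [← map_mul, ← map_mul, h1]; simp

omit [Algebra ℚ R] in
lemma D_aeval (D : Derivation R B B) (s : B) (hs : D s = 1) (p : D.kerSubalgebra[X]) :
    D (aeval (R := D.kerSubalgebra) s p) = aeval (R := D.kerSubalgebra) s (derivative p) := by
  induction p using Polynomial.induction_on' with
  | add p q hp hq => rw [derivative_add, map_add, map_add, map_add, hp, hq]
  | monomial n a =>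
    rw [aeval_monomial, derivative_monomial, aeval_monomial]
    have hcoe : (algebraMap D.kerSubalgebra B) a = (a : B) := rfl
    have ha : D (a : B) = 0 := a.2
    rw [D.leibniz, D.leibniz_pow, hs]
    simp only [hcoe, ha, smul_eq_mul, mul_zero, add_zero, map_mul, smul_smul, mul_one]
    rw [map_natCast, nsmul_eq_mul]
    ring

lemma exists_integral (D : Derivation R B B) (p : D.kerSubalgebra[X]) :
    ∃ P : D.kerSubalgebra[X], derivative P = p := by
  induction p using Polynomial.induction_on' with
  | add p q hp hq =>
    obtain ⟨P, hP⟩ := hp; obtain ⟨Q, hQ⟩ := hq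
    exact ⟨P + Q, by rw [derivative_add, hP, hQ]⟩
  | monomial n a =>
    refine ⟨monomial (n + 1) (invA D (n + 1) * a), ?_⟩
    rw [derivative_monomial]
    simp only [Nat.add_sub_cancel]
    congr 1
    rw [mul_comm]
    exact_mod_cast invA_mul D (n + 1) (Nat.succ_ne_zero n) a

end Aux

/-- Slice theorem: if `R` contains `ℚ`, `B` is an `R`-algebra, `D` a locally nilpotent
`R`-derivation with kernel `A`, and `s` a slice (`D s = 1`), then `B = A[s]` and the
evaluation `A[X] → B`, `X ↦ s`, is an isomorphism of `A`-algebras. -/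
theorem slice_theorem {R B : Type*} [CommRing R] [Algebra ℚ R] [CommRing B] [Algebra R B]
    (D : Derivation R B B) (hD : ∀ b : B, ∃ n : ℕ, (D.toLinearMap ^ n) b = 0)
    (s : B) (hs : D s = 1) :
    Algebra.adjoin (↥D.kerSubalgebra) ({s} : Set B) = ⊤ ∧
      Function.Bijective (Polynomial.aeval (R := ↥D.kerSubalgebra) s) := by
  -- Surjectivity
  have surj : Function.Surjective (Polynomial.aeval (R := ↥D.kerSubalgebra) s) := by
    have key : ∀ n : ℕ, ∀ b : B, (D.toLinearMap ^ n) b = 0 →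
        ∃ p : D.kerSubalgebra[X], aeval (R := ↥D.kerSubalgebra) s p = b := by
      intro n
      induction n with
      | zero => intro b hb; simp at hb; exact ⟨0, by simp [hb.symm]⟩
      | succ n ih =>
        intro b hb
        have hb' : (D.toLinearMap ^ n) (D b) = 0 := by
          rw [show D b = D.toLinearMap b from rfl, ← Module.End.mul_apply, ← pow_succ]
          exact hb
        obtain ⟨p, hp⟩ := ih (D b) hb'
        obtain ⟨P, hP⟩ := exists_integral D p
        have hker : b - aeval (R := ↥D.kerSubalgebra) s P ∈ D.kerSubalgebra := by
          show D _ = 0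
          rw [map_sub, D_aeval D s hs, hP, hp, sub_self]
        refine ⟨C ⟨_, hker⟩ + P, ?_⟩
        rw [map_add, aeval_C]
        show ((⟨b - aeval (R := ↥D.kerSubalgebra) s P, hker⟩ : D.kerSubalgebra) : B) + _ = b
        simp
    intro b
    obtain ⟨n, hn⟩ := hD b
    exact key n b hn
  -- Injectivity
  have inj : Function.Injective (Polynomial.aeval (R := ↥D.kerSubalgebra) s) := by
    rw [injective_iff_map_eq_zero]
    have key : ∀ N : ℕ, ∀ p : D.kerSubalgebra[X], p.natDegree ≤ N →
        aeval (R := ↥D.kerSubalgebra) s p = 0 → p = 0 := by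
      intro N
      induction N with
      | zero =>
        intro p hdeg hp
        rw [eq_C_of_natDegree_eq_zero (Nat.le_zero.mp hdeg)] at hp ⊢
        rw [aeval_C] at hp
        have : p.coeff 0 = 0 := Subtype.ext hp
        rw [this, map_zero]
      | succ N ih =>
        intro p hdeg hp
        by_cases h0 : p.natDegree = 0
        · rw [eq_C_of_natDegree_eq_zero h0] at hp ⊢
          rw [aeval_C] at hp
          have : p.coeff 0 = 0 := Subtype.ext hp
          rw [this, map_zero]
        · exfalso
          have hd : aeval (R := ↥D.kerSubalgebra) s (derivative p) = 0 := by
            rw [← D_aeval D s hs, hp, map_zero]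
          have hlt : (derivative p).natDegree < p.natDegree := natDegree_derivative_lt h0
          have hder : derivative p = 0 :=
            ih (derivative p) (by omega) hd
          have hlead : p.coeff p.natDegree = 0 := by
            obtain ⟨m, hm⟩ := Nat.exists_eq_succ_of_ne_zero h0
            have hc : (derivative p).coeff m = 0 := by rw [hder]; simp
            rw [coeff_derivative] at hc
            have h2 := invA_mul D (m + 1) (Nat.succ_ne_zero m) (p.coeff (m + 1))
            rw [mul_comm] at hc
            rw [hm]
            have hc' : ((m : D.kerSubalgebra) + 1) * p.coeff (m + 1) = 0 := hc
            calc p.coeff (m + 1)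
                = ((m + 1 : ℕ) : D.kerSubalgebra) * (invA D (m + 1) * p.coeff (m + 1)) := h2.symm
              _ = invA D (m + 1) * (((m : D.kerSubalgebra) + 1) * p.coeff (m + 1)) := by
                  push_cast; ring
              _ = 0 := by rw [hc', mul_zero]
          have hne : p ≠ 0 := fun hz => h0 (by rw [hz]; simp)
          exact leadingCoeff_ne_zero.mpr hne hlead
    intro p hp
    exact key p.natDegree p le_rfl hp
  have adj : Algebra.adjoin (↥D.kerSubalgebra) ({s} : Set B) = ⊤ := by
    rw [Algebra.adjoin_singleton_eq_range_aeval]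
    exact (AlgHom.range_eq_top _).mpr surj
  exact ⟨adj, inj, surj⟩
end

section
/- Let R be a ring, C = R[X₁,…,Xₙ] a polynomial ring over R, and A an R-algebra. If A ⊗_R C is an 𝔸^r-fibration over C for some r ≥ 0, then A is an 𝔸^r-fibration over R. -/
open scoped TensorProduct

/-- `A` is an `𝔸^r`-fibration over `R`: `A` is a finitely generated flat `R`-algebra such
that the fibre `A ⊗_R k(𝔭)` is a polynomial ring in `r` variables over the residue field
`k(𝔭)` for every prime `𝔭` of `R`. -/
def IsAffineFibration (R : Type*) (A : Type*) [CommRing R] [CommRing A] [Algebra R A]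
    (r : ℕ) : Prop :=
  Algebra.FiniteType R A ∧ Module.Flat R A ∧
    ∀ (𝔭 : Ideal R) [𝔭.IsPrime],
      Nonempty ((IsLocalRing.ResidueField (Localization.AtPrime 𝔭)) ⊗[R] A
        ≃ₐ[IsLocalRing.ResidueField (Localization.AtPrime 𝔭)]
          MvPolynomial (Fin r) (IsLocalRing.ResidueField (Localization.AtPrime 𝔭)))

/-!
`R[X₁,…,Xₙ]` has the `R`-algebra retraction `Xᵢ ↦ 0`, and base change of `C ⊗_R A` along it
gives back `A`. Being an `𝔸^r`-fibration is stable under base change `S → T`: the fibre of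
`T ⊗_S B` at `𝔭` is the fibre of `B` at `𝔭 ∩ S`, with scalars extended along
`k(𝔭 ∩ S) → k(𝔭)`, and a polynomial ring stays a polynomial ring under extension of scalars.
-/

noncomputable def tensorAlgEquivMvPolynomialOfTower {S k K B σ : Type*} [CommRing S]
    [CommRing k] [CommRing K] [CommRing B] [Algebra S k] [Algebra k K] [Algebra S K]
    [IsScalarTower S k K] [Algebra S B] (e : k ⊗[S] B ≃ₐ[k] MvPolynomial σ k) :
    K ⊗[S] B ≃ₐ[K] MvPolynomial σ K :=
  (Algebra.TensorProduct.cancelBaseChange S k K K B).symm.trans <|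
    (Algebra.TensorProduct.congr AlgEquiv.refl e).trans (MvPolynomial.algebraTensorAlgEquiv k K)

namespace IsAffineFibration

theorem of_algEquiv {R A B : Type*} [CommRing R] [CommRing A] [CommRing B] [Algebra R A]
    [Algebra R B] {r : ℕ} (e : A ≃ₐ[R] B) (h : IsAffineFibration R A r) :
    IsAffineFibration R B r := by
  obtain ⟨hft, hfl, hfib⟩ := h
  refine ⟨hft.equiv e, Module.Flat.of_linearEquiv e.toLinearEquiv.symm, fun 𝔭 _ => ?_⟩
  obtain ⟨f⟩ := hfib 𝔭
  exact ⟨(Algebra.TensorProduct.congr AlgEquiv.refl e).symm.trans f⟩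

theorem baseChange {S T B : Type*} [CommRing S] [CommRing T] [CommRing B] [Algebra S T]
    [Algebra S B] {r : ℕ} (h : IsAffineFibration S B r) :
    IsAffineFibration T (T ⊗[S] B) r := by
  obtain ⟨hft, hfl, hfib⟩ := h
  refine ⟨inferInstance, inferInstance, fun 𝔭 _ => ?_⟩
  let 𝔮 := 𝔭.comap (algebraMap S T)
  obtain ⟨e⟩ := hfib 𝔮
  let : Algebra 𝔮.ResidueField 𝔭.ResidueField :=
    (Ideal.ResidueField.map 𝔮 𝔭 (algebraMap S T) rfl).toAlgebra
  have : IsScalarTower S 𝔮.ResidueField 𝔭.ResidueField := .of_algebraMap_eq fun s => by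
    rw [RingHom.algebraMap_toAlgebra, Ideal.ResidueField.map_algebraMap,
      ← IsScalarTower.algebraMap_apply]
  exact ⟨(Algebra.TensorProduct.cancelBaseChange S T _ _ B).trans
    (tensorAlgEquivMvPolynomialOfTower e)⟩

theorem of_baseChange_of_retraction {R C A : Type*} [CommRing R] [CommRing C] [CommRing A]
    [Algebra R C] [Algebra R A] {r : ℕ} (σ : C →ₐ[R] R)
    (h : IsAffineFibration C (C ⊗[R] A) r) : IsAffineFibration R A r := by
  let : Algebra C R := σ.toAlgebra
  have : IsScalarTower R C R := .of_algebraMap_eq fun x => (σ.commutes x).symm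
  exact h.baseChange.of_algEquiv
    ((Algebra.TensorProduct.cancelBaseChange R C R R A).trans (Algebra.TensorProduct.lid R A))

end IsAffineFibration

/-- If `C = R[X₁,…,Xₙ]` and `A ⊗_R C` is an `𝔸^r`-fibration over `C`, then `A` is an
`𝔸^r`-fibration over `R`. -/
theorem isAffineFibration_of_baseChange_polynomial {R A : Type*} [CommRing R]
    [CommRing A] [Algebra R A] (n r : ℕ)
    (h : IsAffineFibration (MvPolynomial (Fin n) R)
      ((MvPolynomial (Fin n) R) ⊗[R] A) r) :
    IsAffineFibration R A r :=
  h.of_baseChange_of_retraction (MvPolynomial.aeval 0)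
end

section
/- Let B be an integral domain and A the kernel of a derivation D : B → B (with B a ℚ-algebra and D locally nilpotent). Then A is an inert (factorially closed) subring of B: if a, b ∈ B \ {0} and ab ∈ A, then a, b ∈ A. -/
open Finset in
lemma lnd_leibniz {B : Type*} [CommRing B] [Algebra ℚ B]
    (D : Derivation ℚ B B) (a b : B) (n : ℕ) :
    (D.toLinearMap ^ n) (a * b) =
      ∑ i ∈ Finset.range (n + 1),
        n.choose i • ((D.toLinearMap ^ i) a * (D.toLinearMap ^ (n - i)) b) := by
  induction n with
  | zero => simp
  | succ n ih =>
      have : (D.toLinearMap ^ (n + 1)) (a * b)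
          = D.toLinearMap ((D.toLinearMap ^ n) (a * b)) := by
        rw [pow_succ']; rfl
      rw [this, ih, map_sum]
      have step : ∀ i, D.toLinearMap
            (n.choose i • ((D.toLinearMap ^ i) a * (D.toLinearMap ^ (n - i)) b))
          = n.choose i • ((D.toLinearMap ^ (i+1)) a * (D.toLinearMap ^ (n - i)) b)
            + n.choose i • ((D.toLinearMap ^ i) a * (D.toLinearMap ^ (n - i + 1)) b) := by
        intro i
        rw [map_nsmul]
        have : D.toLinearMap ((D.toLinearMap ^ i) a * (D.toLinearMap ^ (n - i)) b)
            = (D.toLinearMap ^ (i+1)) a * (D.toLinearMap ^ (n - i)) b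
              + (D.toLinearMap ^ i) a * (D.toLinearMap ^ (n - i + 1)) b := by
          show D ((D.toLinearMap ^ i) a * (D.toLinearMap ^ (n - i)) b) = _
          rw [D.leibniz, smul_eq_mul, smul_eq_mul, pow_succ', pow_succ',
            Module.End.mul_apply, Module.End.mul_apply]
          show _ = D _ * _ + _ * D _
          ring
        rw [this, smul_add]
      simp_rw [step]
      rw [Finset.sum_add_distrib,
        Finset.sum_range_succ' (fun i =>
          (n+1).choose i • ((D.toLinearMap ^ i) a * (D.toLinearMap ^ (n + 1 - i)) b)) (n+1)]
      simp only [Nat.succ_sub_succ, Nat.choose_succ_succ, add_smul, Finset.sum_add_distrib,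
        Nat.choose_zero_right, one_smul, pow_zero, Module.End.one_apply, Nat.sub_zero]
      rw [add_assoc]
      congr 1
      rw [Finset.sum_range_succ' (fun i =>
          n.choose i • ((D.toLinearMap ^ i) a * (D.toLinearMap ^ (n - i + 1)) b)) n,
        Finset.sum_range_succ (fun i =>
          n.choose (i+1) • ((D.toLinearMap ^ (i+1)) a * (D.toLinearMap ^ (n - i)) b)) n]
      rw [Nat.choose_succ_self, zero_smul, add_zero, Nat.choose_zero_right, one_smul,
        pow_zero, Module.End.one_apply, Nat.sub_zero]
      congr 1
      refine Finset.sum_congr rfl fun i hi => ?_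
      have : n - (i + 1) + 1 = n - i := by
        have := Finset.mem_range.mp hi; omega
      rw [this]

/-- The kernel of a locally nilpotent derivation on an integral domain containing `ℚ`
is factorially closed (inert): if `a, b ≠ 0` and `D(ab) = 0`, then `D a = 0` and `D b = 0`. -/
theorem ker_lnd_factorially_closed {B : Type*} [CommRing B] [IsDomain B] [Algebra ℚ B]
    (D : Derivation ℚ B B) (hD : ∀ b : B, ∃ n : ℕ, (D.toLinearMap ^ n) b = 0)
    (a b : B) (ha : a ≠ 0) (hb : b ≠ 0) (hab : D (a * b) = 0) :
    D a = 0 ∧ D b = 0 := by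
  classical
  haveI : CharZero B := charZero_of_injective_algebraMap (algebraMap ℚ B).injective
  set L := D.toLinearMap with hL
  have hzero : ∀ (x : B) (m k : ℕ), (L ^ m) x = 0 → m ≤ k → (L ^ k) x = 0 := by
    intro x m k h hk
    obtain ⟨j, rfl⟩ := Nat.exists_eq_add_of_le hk
    rw [add_comm, pow_add, Module.End.mul_apply, h, map_zero]
  set m := Nat.find (hD a) with hmdef
  set n := Nat.find (hD b) with hndef
  have hma : (L ^ m) a = 0 := Nat.find_spec (hD a)
  have hnb : (L ^ n) b = 0 := Nat.find_spec (hD b)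
  have hm1 : 1 ≤ m := by
    rcases Nat.eq_zero_or_pos m with h | h
    · exfalso; apply ha
      have := hma; rw [h, pow_zero, Module.End.one_apply] at this; exact this
    · exact h
  have hn1 : 1 ≤ n := by
    rcases Nat.eq_zero_or_pos n with h | h
    · exfalso; apply hb
      have := hnb; rw [h, pow_zero, Module.End.one_apply] at this; exact this
    · exact h
  have key : m = 1 ∧ n = 1 := by
    by_contra hcon
    have h3 : 3 ≤ m + n := by omega
    set N := m + n - 2 with hNdef
    have hN : (L ^ N) (a * b) = 0 := by
      have hN1 : N = (N - 1) + 1 := by omega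
      rw [hN1, pow_succ, Module.End.mul_apply]
      have : L (a * b) = 0 := hab
      rw [this, map_zero]
    rw [lnd_leibniz] at hN
    have single : ∀ i ∈ Finset.range (N + 1), i ≠ m - 1 →
        N.choose i • ((L ^ i) a * (L ^ (N - i)) b) = 0 := by
      intro i _ hi
      rcases lt_or_ge i (m - 1) with h' | h'
      · have : (L ^ (N - i)) b = 0 := hzero b n _ hnb (by omega)
        rw [this, mul_zero, smul_zero]
      · have : (L ^ i) a = 0 := hzero a m i hma (by omega)
        rw [this, zero_mul, smul_zero]
    rw [Finset.sum_eq_single (m - 1) single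
      (fun h => absurd (Finset.mem_range.mpr (by omega)) h)] at hN
    have hNm : N - (m - 1) = n - 1 := by omega
    rw [hNm, nsmul_eq_mul] at hN
    have hca : (L ^ (m - 1)) a ≠ 0 := Nat.find_min (hD a) (by omega)
    have hcb : (L ^ (n - 1)) b ≠ 0 := Nat.find_min (hD b) (by omega)
    have hch : ((N.choose (m - 1) : ℕ) : B) ≠ 0 :=
      Nat.cast_ne_zero.mpr (Nat.choose_pos (by omega)).ne'
    exact mul_ne_zero hch (mul_ne_zero hca hcb) hN
  constructor
  · have := hma; rw [key.1, pow_one] at this; exact this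
  · have := hnb; rw [key.2, pow_one] at this; exact this
end

section
/- Let k be a field of characteristic zero, C = k[X,Y,Z], and D̃ = X⁴ ∂/∂Z restricted to the subring C' = A[Z+XZ²] + X²k[X,Y,Z] where A = k[X²,X³][Y+XY²] + X²k[X,Y]. Then the ideal D̃(C')C' = (X⁶, X⁴+2X⁵Z)C' has grade 1 on C'; in particular X⁴·(X⁴+2X⁵Z) ∈ X⁶C', so X⁶, X⁴+2X⁵Z do not form a C'-regular sequence. -/
open scoped Classical
open MvPolynomial

/-- The grade of an ideal `I` of a commutative ring `S`: the length of a maximal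
`S`-regular sequence contained in `I` when `I ≠ S`, and `∞` when `I = S`. -/
noncomputable def Ideal.grade {S : Type*} [CommRing S] (I : Ideal S) : ℕ∞ :=
  if I = ⊤ then ⊤
  else ↑(sSup {n : ℕ | ∃ rs : List S, rs.length = n ∧
    RingTheory.Sequence.IsRegular S rs ∧ ∀ x ∈ rs, x ∈ I})

noncomputable section

variable (k : Type*) [Field k] [CharZero k]

/-- `C' = A[Z + XZ²] + X²·k[X,Y,Z]` inside `k[X,Y,Z]`, where
`A = k[X²,X³][Y + XY²] + X²·k[X,Y]` (with `X = X 0`, `Y = X 1`, `Z = X 2`);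
equivalently, `C' = k[X²,X³][Y+XY², Z+XZ²] + X²·k[X,Y,Z]`. -/
def Csub : Subalgebra k (MvPolynomial (Fin 3) k) where
  carrier := {b | ∃ p ∈ Algebra.adjoin k
    {(X 0 : MvPolynomial (Fin 3) k) ^ 2, X 0 ^ 3,
      X 1 + X 0 * X 1 ^ 2, X 2 + X 0 * X 2 ^ 2},
    ∃ q : MvPolynomial (Fin 3) k, b = p + X 0 ^ 2 * q}
  mul_mem' := by
    rintro a b ⟨p₁, hp₁, q₁, rfl⟩ ⟨p₂, hp₂, q₂, rfl⟩
    exact ⟨p₁ * p₂, mul_mem hp₁ hp₂, p₁ * q₂ + q₁ * p₂ + X 0 ^ 2 * (q₁ * q₂), by ring⟩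
  add_mem' := by
    rintro a b ⟨p₁, hp₁, q₁, rfl⟩ ⟨p₂, hp₂, q₂, rfl⟩
    exact ⟨p₁ + p₂, add_mem hp₁ hp₂, q₁ + q₂, by ring⟩
  one_mem' := ⟨1, one_mem _, 0, by ring⟩
  zero_mem' := ⟨0, zero_mem _, 0, by ring⟩
  algebraMap_mem' := fun r =>
    ⟨algebraMap k _ r, Subalgebra.algebraMap_mem _ r, 0, by ring⟩

/-- `X⁶`, as an element of `C'` (indeed `X⁶ = X²·X⁴ ∈ X²k[X,Y,Z]`). -/
def x6 : Csub k := ⟨X 0 ^ 6, ⟨0, zero_mem _, X 0 ^ 4, by ring⟩⟩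

/-- `X⁴`, as an element of `C'`. -/
def x4 : Csub k := ⟨X 0 ^ 4, ⟨0, zero_mem _, X 0 ^ 2, by ring⟩⟩

/-- `X⁴ + 2X⁵Z`, as an element of `C'` (it is the image of `Z + XZ²` under `X⁴ ∂/∂Z`). -/
def g : Csub k := ⟨X 0 ^ 4 + 2 * X 0 ^ 5 * X 2,
  ⟨0, zero_mem _, X 0 ^ 2 + 2 * X 0 ^ 3 * X 2, by ring⟩⟩

/-! ### Auxiliary lemmas -/

set_option maxHeartbeats 1000000
set_option synthInstance.maxHeartbeats 200000
set_option linter.unusedSectionVars false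

open Pointwise RingTheory.Sequence

lemma aux_aeval0 (c : MvPolynomial (Fin 3) k) {n : ℕ} (hn : 0 < n) :
    X 0 ^ n * c ≠ 1 := by
  intro h
  have := congrArg (aeval (fun _ => (0:k))) h
  simp [zero_pow hn.ne'] at this

lemma aux_smul_top_eq {R : Type*} [CommRing R] (a : R) :
    a • (⊤ : Submodule R R) = Ideal.span {a} := by
  rw [← Submodule.ideal_span_singleton_smul, Ideal.smul_eq_mul, Ideal.mul_top]

lemma aux_x2_mem (q : MvPolynomial (Fin 3) k) : X 0 ^ 2 * q ∈ Csub k :=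
  ⟨0, zero_mem _, q, by ring⟩

lemma aux_key (a b : Csub k)
    (ha : a ∈ Ideal.span {x6 k, g k}) (hb : b ∈ Ideal.span {x6 k, g k})
    (h1 : IsSMulRegular (Csub k) a)
    (h2 : IsSMulRegular (QuotSMulTop a (Csub k)) b) : False := by
  obtain ⟨p, q, hpq⟩ := Ideal.mem_span_pair.mp ha
  obtain ⟨p', q', hpq'⟩ := Ideal.mem_span_pair.mp hb
  set a' : Csub k := ⟨X 0 ^ 2 * ((p : MvPolynomial (Fin 3) k) * X 0 ^ 2
      + (q : MvPolynomial (Fin 3) k) * (1 + 2 * X 0 * X 2)), aux_x2_mem k _⟩ with ha'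
  set b' : Csub k := ⟨X 0 ^ 2 * ((p' : MvPolynomial (Fin 3) k) * X 0 ^ 2
      + (q' : MvPolynomial (Fin 3) k) * (1 + 2 * X 0 * X 2)), aux_x2_mem k _⟩ with hb'
  have ha2 : (a : MvPolynomial (Fin 3) k) = X 0 ^ 2 * (a' : MvPolynomial (Fin 3) k) := by
    have h := congrArg Subtype.val hpq
    simp only [AddMemClass.coe_add, MulMemClass.coe_mul] at h
    rw [← h]
    show (p : MvPolynomial (Fin 3) k) * (X 0 ^ 6)
        + (q : MvPolynomial (Fin 3) k) * (X 0 ^ 4 + 2 * X 0 ^ 5 * X 2) = _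
    ring
  have hb2 : (b : MvPolynomial (Fin 3) k) = X 0 ^ 2 * (b' : MvPolynomial (Fin 3) k) := by
    have h := congrArg Subtype.val hpq'
    simp only [AddMemClass.coe_add, MulMemClass.coe_mul] at h
    rw [← h]
    show (p' : MvPolynomial (Fin 3) k) * (X 0 ^ 6)
        + (q' : MvPolynomial (Fin 3) k) * (X 0 ^ 4 + 2 * X 0 ^ 5 * X 2) = _
    ring
  have hmul : b * a' = a * b' := by
    apply Subtype.ext
    simp only [MulMemClass.coe_mul]
    rw [ha2, hb2]; ring
  have hz : b • (Submodule.Quotient.mk a' : QuotSMulTop a (Csub k)) = b • 0 := by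
    rw [smul_zero, ← Submodule.Quotient.mk_smul, Submodule.Quotient.mk_eq_zero,
      aux_smul_top_eq, smul_eq_mul, hmul]
    exact Ideal.mem_span_singleton.mpr ⟨b', rfl⟩
  have hmem := h2 hz
  rw [Submodule.Quotient.mk_eq_zero, aux_smul_top_eq, Ideal.mem_span_singleton] at hmem
  obtain ⟨c, hc⟩ := hmem
  have hane : (a : MvPolynomial (Fin 3) k) ≠ 0 := by
    intro h0
    have ha0 : a = 0 := Subtype.ext h0
    have h10 : a • (1 : Csub k) = a • (0 : Csub k) := by rw [ha0]; simp
    have := congrArg Subtype.val (h1 h10)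
    simp at this
  have hc' := congrArg Subtype.val hc
  simp only [MulMemClass.coe_mul] at hc'
  have heq : (a : MvPolynomial (Fin 3) k)
      * (1 - X 0 ^ 2 * (c : MvPolynomial (Fin 3) k)) = 0 := by
    have h3 : (a : MvPolynomial (Fin 3) k)
        = X 0 ^ 2 * ((a : MvPolynomial (Fin 3) k) * (c : MvPolynomial (Fin 3) k)) := by
      rw [← hc']; exact ha2
    linear_combination h3
  rcases mul_eq_zero.mp heq with h | h
  · exact hane h
  · exact aux_aeval0 k (c : MvPolynomial (Fin 3) k) (n := 2) (by norm_num)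
      (by linear_combination -h)

lemma aux_span_ne_top : (Ideal.span {x6 k, g k} : Ideal (Csub k)) ≠ ⊤ := by
  intro h
  have h1 : (1 : Csub k) ∈ Ideal.span {x6 k, g k} := h ▸ Submodule.mem_top
  obtain ⟨p, q, hpq⟩ := Ideal.mem_span_pair.mp h1
  have h2 := congrArg Subtype.val hpq
  simp only [AddMemClass.coe_add, MulMemClass.coe_mul, OneMemClass.coe_one] at h2
  have h3 : X 0 ^ 2 * ((p : MvPolynomial (Fin 3) k) * X 0 ^ 4
      + (q : MvPolynomial (Fin 3) k) * (X 0 ^ 2 + 2 * X 0 ^ 3 * X 2)) = 1 := by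
    rw [← h2]
    show _ = (p : MvPolynomial (Fin 3) k) * (X 0 ^ 6)
        + (q : MvPolynomial (Fin 3) k) * (X 0 ^ 4 + 2 * X 0 ^ 5 * X 2)
    ring
  exact aux_aeval0 k _ (n := 2) (by norm_num) h3

lemma aux_x6_regular : IsSMulRegular (Csub k) (x6 k) := by
  intro x y h
  have h' := congrArg Subtype.val h
  simp only [smul_eq_mul, MulMemClass.coe_mul] at h'
  refine Subtype.ext (mul_left_cancel₀ (a := (x6 k : MvPolynomial (Fin 3) k)) ?_ h')
  show (X 0 : MvPolynomial (Fin 3) k) ^ 6 ≠ 0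
  exact pow_ne_zero _ (X_ne_zero 0)

lemma aux_reg_single : RingTheory.Sequence.IsRegular (Csub k) [x6 k] := by
  rw [RingTheory.Sequence.isRegular_iff]
  constructor
  · rw [RingTheory.Sequence.isWeaklyRegular_cons_iff]
    exact ⟨aux_x6_regular k, .nil _ _⟩
  · intro h
    have hset : {r | r ∈ [x6 k]} = {x6 k} := by ext r; simp
    rw [Ideal.ofList, hset, Ideal.smul_eq_mul, Ideal.mul_top] at h
    have h1 : (1 : Csub k) ∈ Ideal.span {x6 k} := h ▸ Submodule.mem_top
    obtain ⟨c, hc⟩ := Ideal.mem_span_singleton.mp h1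
    have h2 := congrArg Subtype.val hc
    simp only [MulMemClass.coe_mul, OneMemClass.coe_one] at h2
    refine aux_aeval0 k (c : MvPolynomial (Fin 3) k) (n := 6) (by norm_num) ?_
    exact h2.symm

/-- The ideal `D̃(C')C' = (X⁶, X⁴ + 2X⁵Z)C'` (where `D̃ = X⁴ ∂/∂Z`) has grade `1` on
`C'`; in particular `X⁴·(X⁴+2X⁵Z) ∈ X⁶C'`, so `X⁶, X⁴+2X⁵Z` is not a `C'`-regular
sequence. -/
theorem grade_image_eq_one :
    (Ideal.span {x6 k, g k} : Ideal (Csub k)).grade = 1 ∧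
      x4 k * g k ∈ Ideal.span ({x6 k} : Set (Csub k)) ∧
      ¬ RingTheory.Sequence.IsRegular (Csub k) [x6 k, g k] := by
  have hx6mem : x6 k ∈ Ideal.span {x6 k, g k} := Ideal.subset_span (Set.mem_insert _ _)
  have hgmem : g k ∈ Ideal.span {x6 k, g k} :=
    Ideal.subset_span (Set.mem_insert_of_mem _ rfl)
  refine ⟨?_, ?_, ?_⟩
  · simp only [Ideal.grade, if_neg (aux_span_ne_top k)]
    have hS1 : 1 ∈ {n : ℕ | ∃ rs : List (Csub k), rs.length = n ∧
        RingTheory.Sequence.IsRegular (Csub k) rs ∧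
        ∀ x ∈ rs, x ∈ Ideal.span {x6 k, g k}} := by
      refine ⟨[x6 k], rfl, aux_reg_single k, ?_⟩
      intro x hx
      rw [List.mem_singleton] at hx
      rw [hx]; exact hx6mem
    have hbd : ∀ n ∈ {n : ℕ | ∃ rs : List (Csub k), rs.length = n ∧
        RingTheory.Sequence.IsRegular (Csub k) rs ∧
        ∀ x ∈ rs, x ∈ Ideal.span {x6 k, g k}}, n ≤ 1 := by
      rintro n ⟨rs, rfl, hreg, hmem⟩
      by_contra hlt
      push_neg at hlt
      match rs, hlt with
      | a :: b :: rest, _ =>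
        have hw := hreg.toIsWeaklyRegular
        rw [RingTheory.Sequence.isWeaklyRegular_cons_iff] at hw
        obtain ⟨h1, hw2⟩ := hw
        rw [RingTheory.Sequence.isWeaklyRegular_cons_iff] at hw2
        exact aux_key k a b (hmem a (by simp)) (hmem b (by simp)) h1 hw2.1
    have : sSup {n : ℕ | ∃ rs : List (Csub k), rs.length = n ∧
        RingTheory.Sequence.IsRegular (Csub k) rs ∧
        ∀ x ∈ rs, x ∈ Ideal.span {x6 k, g k}} = 1 :=
      le_antisymm (csSup_le ⟨1, hS1⟩ hbd) (le_csSup ⟨1, hbd⟩ hS1)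
    rw [this]; rfl
  · refine Ideal.mem_span_singleton.mpr ⟨⟨X 0 ^ 2 * (1 + 2 * X 0 * X 2), aux_x2_mem k _⟩, ?_⟩
    apply Subtype.ext
    show (X 0 : MvPolynomial (Fin 3) k) ^ 4 * (X 0 ^ 4 + 2 * X 0 ^ 5 * X 2)
        = X 0 ^ 6 * (X 0 ^ 2 * (1 + 2 * X 0 * X 2))
    ring
  · intro h
    have hw := h.toIsWeaklyRegular
    rw [RingTheory.Sequence.isWeaklyRegular_cons_iff] at hw
    obtain ⟨h1, hw2⟩ := hw
    rw [RingTheory.Sequence.isWeaklyRegular_cons_iff] at hw2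
    exact aux_key k (x6 k) (g k) hx6mem hgmem h1 hw2.1

end
end

section
/- Let R = ℝ + X·ℂ[[X]] ⊆ S = ℂ[[X]], and B = R[Y,Z]. Define the S-derivation D̃ on S[Y,Z] by D̃(Y) = iX and D̃(Z) = −X, and let D be its restriction to B. Then D is a locally nilpotent R-derivation of B, and the ideal D(B)B = (iX, −X)B ∩ B has grade 1 on B (in particular D(B)B is a proper ideal of B contained in XS[Y,Z] ∩ B). -/
open scoped Classical

set_option synthInstance.maxHeartbeats 1000000
set_option maxHeartbeats 1000000

noncomputable section

/-- `R = ℝ + X·ℂ[[X]]`, the subring of `S = ℂ[[X]]` of power series with real constant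
term. -/
def Rsub : Subalgebra ℝ (PowerSeries ℂ) where
  carrier := {f | (PowerSeries.constantCoeff f).im = 0}
  mul_mem' := by
    intro f g hf hg
    simp only [Set.mem_setOf_eq, map_mul, Complex.mul_im] at *
    rw [hf, hg]
    ring
  add_mem' := by
    intro f g hf hg
    simp only [Set.mem_setOf_eq, map_add, Complex.add_im] at *
    rw [hf, hg]
    ring
  one_mem' := by simp [Set.mem_setOf_eq]
  zero_mem' := by simp [Set.mem_setOf_eq]
  algebraMap_mem' := fun r => by
    simp [Set.mem_setOf_eq, PowerSeries.algebraMap_apply]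

/-- `iX ∈ R`. -/
def iX : Rsub := ⟨PowerSeries.C Complex.I * PowerSeries.X, by
  change (PowerSeries.constantCoeff (PowerSeries.C Complex.I * PowerSeries.X)).im = 0
  simp⟩

/-- `-X ∈ R`. -/
def negX : Rsub := ⟨-PowerSeries.X, by
  change (PowerSeries.constantCoeff (-PowerSeries.X : PowerSeries ℂ)).im = 0
  simp⟩

/-- The derivation `D` on `B = R[Y,Z]` (with `Y = X 0`, `Z = X 1`) determined by
`D(Y) = iX` and `D(Z) = -X`; it is the restriction to `B` of the `S`-derivation `D̃` on
`S[Y,Z]` with `D̃(Y) = iX`, `D̃(Z) = -X`. -/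
def Dder : Derivation (Rsub) (MvPolynomial (Fin 2) Rsub) (MvPolynomial (Fin 2) Rsub) :=
  MvPolynomial.mkDerivation _ ![MvPolynomial.C iX, MvPolynomial.C negX]

/-! Write `A = iX` and `C = -X`, so that `A ^ 2 + C ^ 2 = 0` while `A ∤ C` in `B`, since
`C / A = i ∉ R`. For a regular `a = p A + q C` in `I = (A, C)`, the element `c = p C - q A`
satisfies `A c = C a` and `C c = -A a`, so `I` annihilates `c` modulo `a`; and `c ∉ a B`, since
`c = a g` would give `A g = C`. Thus no element of `I` is regular modulo `a`, and `I` has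
grade `1`. Local nilpotency holds because `D` sends the variables to constants. -/

namespace Derivation

variable {R A : Type*} [CommSemiring R] [CommSemiring A] [Algebra R A] (D : Derivation R A A)

open Finset in
theorem iterate_apply_mul (n : ℕ) (a b : A) :
    D^[n] (a * b) = ∑ ij ∈ antidiagonal n, n.choose ij.1 • (D^[ij.1] a * D^[ij.2] b) := by
  induction n with
  | zero => simp
  | succ n ih =>
    rw [sum_antidiagonal_choose_succ_nsmul (fun i j ↦ D^[i] a * D^[j] b) n]
    simp only [Function.iterate_succ_apply', ih, map_sum, map_nsmul, leibniz, smul_eq_mul,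
      smul_add, sum_add_distrib]
    congr 1
    refine sum_congr rfl fun ⟨i, j⟩ hij ↦ ?_
    rw [n.choose_symm_of_eq_add (mem_antidiagonal.1 hij).symm]
    ring

theorem iterate_eq_zero_of_le {m k : ℕ} {a : A} (hm : D^[m] a = 0) (h : m ≤ k) :
    D^[k] a = 0 := by
  obtain ⟨d, rfl⟩ := Nat.exists_eq_add_of_le h
  rw [add_comm, Function.iterate_add_apply, hm, iterate_map_zero]

def locallyNilpotentSubalgebra : Subalgebra R A where
  carrier := {a | ∃ n, D^[n] a = 0}
  mul_mem' := by
    rintro a b ⟨m, hm⟩ ⟨n, hn⟩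
    refine ⟨m + n, D.iterate_apply_mul _ a b ▸ Finset.sum_eq_zero fun ⟨i, j⟩ hij ↦ ?_⟩
    have hij : i + j = m + n := Finset.HasAntidiagonal.mem_antidiagonal.1 hij
    rcases le_or_gt m i with hi | hi
    · rw [D.iterate_eq_zero_of_le hm hi, zero_mul, smul_zero]
    · rw [D.iterate_eq_zero_of_le hn (by omega), mul_zero, smul_zero]
  add_mem' := by
    rintro a b ⟨m, hm⟩ ⟨n, hn⟩
    refine ⟨m + n, ?_⟩
    rw [iterate_map_add, D.iterate_eq_zero_of_le hm (by omega),
      D.iterate_eq_zero_of_le hn (by omega), add_zero]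
  algebraMap_mem' r := ⟨1, D.map_algebraMap r⟩

end Derivation

namespace MvPolynomial

variable {R σ : Type*} [CommSemiring R] (D : Derivation R (MvPolynomial σ R) (MvPolynomial σ R))

theorem exists_iterate_derivation_eq_zero (h : ∀ i, ∃ n, D^[n] (X i) = 0)
    (p : MvPolynomial σ R) : ∃ n, D^[n] p = 0 := by
  have : ⊤ ≤ D.locallyNilpotentSubalgebra := by
    rw [← adjoin_range_X, Algebra.adjoin_le_iff]
    rintro _ ⟨i, rfl⟩
    exact h i
  exact this Algebra.mem_top

theorem span_range_derivation :
    Ideal.span (Set.range D) = Ideal.span (Set.range fun i ↦ D (X i)) := by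
  refine le_antisymm (Ideal.span_le.2 ?_) (Ideal.span_mono ?_)
  · rintro _ ⟨p, rfl⟩
    induction p using MvPolynomial.induction_on with
    | C a => simp [derivation_C]
    | add p q hp hq => rw [map_add]; exact add_mem hp hq
    | mul_X p i hp =>
      rw [D.leibniz, smul_eq_mul, smul_eq_mul]
      exact add_mem (Ideal.mul_mem_left _ _ (Ideal.subset_span ⟨i, rfl⟩))
        (Ideal.mul_mem_left _ _ hp)
  · rintro _ ⟨i, rfl⟩
    exact ⟨X i, rfl⟩

end MvPolynomial

section Grade

variable {T : Type*} [CommRing T]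

open scoped Pointwise

theorem smul_top_eq_span_singleton (a : T) : a • (⊤ : Submodule T T) = Ideal.span {a} := by
  rw [← Submodule.ideal_span_singleton_smul, smul_eq_mul, Ideal.mul_top]

theorem not_isSMulRegular_quotSMulTop_of_dvd_mul {a b c : T} (hc : ¬ a ∣ c) (hbc : a ∣ b * c) :
    ¬ IsSMulRegular (QuotSMulTop a T) b := by
  intro hb
  have hmk : b • (Submodule.Quotient.mk c : QuotSMulTop a T) = b • 0 := by
    rwa [smul_zero, ← Submodule.Quotient.mk_smul, Submodule.Quotient.mk_eq_zero,
      smul_top_eq_span_singleton, smul_eq_mul, Ideal.mem_span_singleton]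
  have := (Submodule.Quotient.mk_eq_zero _).1 (hb hmk)
  rw [smul_top_eq_span_singleton, Ideal.mem_span_singleton] at this
  exact hc this

theorem RingTheory.Sequence.isRegular_singleton {x : T} (hx : IsSMulRegular T x)
    (hI : Ideal.span {x} ≠ ⊤) : IsRegular T [x] := by
  have : Nontrivial (QuotSMulTop x T) :=
    Submodule.Quotient.nontrivial_iff.2 (smul_top_eq_span_singleton x ▸ hI)
  exact IsRegular.cons hx (IsRegular.nil T _)

theorem Ideal.grade_eq_one {I : Ideal T} (hI : I ≠ ⊤) {x : T} (hxI : x ∈ I)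
    (hx : IsSMulRegular T x)
    (h : ∀ a ∈ I, ∀ b ∈ I, IsSMulRegular T a → ¬ IsSMulRegular (QuotSMulTop a T) b) :
    I.grade = 1 := by
  set lengths := {n : ℕ | ∃ rs : List T, rs.length = n ∧
    RingTheory.Sequence.IsRegular T rs ∧ ∀ x ∈ rs, x ∈ I}
  have one_mem : 1 ∈ lengths := by
    refine ⟨[x], rfl, RingTheory.Sequence.isRegular_singleton hx ?_, by simpa using hxI⟩
    exact fun htop ↦ hI (top_le_iff.1 (htop ▸ (Ideal.span_singleton_le_iff_mem I).2 hxI))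
  have le_one : ∀ n ∈ lengths, n ≤ 1 := by
    rintro _ ⟨_ | ⟨a, _ | ⟨b, rs⟩⟩, rfl, hreg, hmem⟩
    · exact zero_le_one
    · exact le_rfl
    · simp only [RingTheory.Sequence.isRegular_cons_iff] at hreg
      exact absurd hreg.2.1 (h a (hmem a (by simp)) b (hmem b (by simp)) hreg.1)
  rw [Ideal.grade, if_neg hI,
    le_antisymm (csSup_le ⟨1, one_mem⟩ le_one) (le_csSup ⟨1, le_one⟩ one_mem)]
  rfl

theorem exists_not_dvd_forall_dvd_mul_of_sq_add_sq_eq_zero {A C a : T}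
    (hAC : A ^ 2 + C ^ 2 = 0) (hAC' : ¬ A ∣ C) (ha : a ∈ Ideal.span {A, C})
    (ha' : IsSMulRegular T a) : ∃ c, ¬ a ∣ c ∧ ∀ b ∈ Ideal.span {A, C}, a ∣ b * c := by
  obtain ⟨p, q, rfl⟩ := Ideal.mem_span_pair.1 ha
  have hA : A * (p * C - q * A) = (p * A + q * C) * C := by linear_combination (-q) * hAC
  have hC : C * (p * C - q * A) = (p * A + q * C) * (-A) := by linear_combination p * hAC
  refine ⟨p * C - q * A, ?_, fun b hb ↦ ?_⟩
  · rintro ⟨g, hg⟩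
    refine hAC' ⟨g, ha' ?_⟩
    simp only [smul_eq_mul]
    linear_combination A * hg - hA
  · obtain ⟨p', q', rfl⟩ := Ideal.mem_span_pair.1 hb
    exact ⟨p' * C - q' * A, by linear_combination p' * hA + q' * hC⟩

theorem Ideal.grade_span_pair_eq_one_of_sq_add_sq_eq_zero {A C : T} (hAC : A ^ 2 + C ^ 2 = 0)
    (hAC' : ¬ A ∣ C) (hA : IsSMulRegular T A)
    (htop : Ideal.span {A, C} ≠ ⊤) : (Ideal.span {A, C}).grade = 1 := by
  refine Ideal.grade_eq_one htop (Ideal.subset_span (Set.mem_insert A _)) hA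
    fun a ha b hb ha' ↦ ?_
  obtain ⟨c, hc, hbc⟩ := exists_not_dvd_forall_dvd_mul_of_sq_add_sq_eq_zero hAC hAC' ha ha'
  exact not_isSMulRegular_quotSMulTop_of_dvd_mul hc (hbc b hb)

end Grade

open MvPolynomial

theorem iX_sq_add_negX_sq : iX ^ 2 + negX ^ 2 = 0 := by
  apply Subtype.ext
  change (PowerSeries.C Complex.I * PowerSeries.X) ^ 2 + (-PowerSeries.X) ^ 2 = 0
  rw [mul_pow, ← map_pow, Complex.I_sq, map_neg, map_one]
  ring

theorem not_iX_dvd_negX : ¬ iX ∣ negX := by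
  rintro ⟨g, hg⟩
  have hX : PowerSeries.X * (PowerSeries.C Complex.I * g.1) = PowerSeries.X * (-1) := by
    have := congrArg Subtype.val hg
    simp only [iX, negX, MulMemClass.coe_mul] at this
    linear_combination -this
  have h0 := congrArg PowerSeries.constantCoeff (mul_left_cancel₀ PowerSeries.X_ne_zero hX)
  rw [map_mul, PowerSeries.constantCoeff_C, map_neg, map_one] at h0
  have hre := congrArg Complex.re h0
  have him : (PowerSeries.constantCoeff g.1).im = 0 := g.2
  simp only [Complex.mul_re, Complex.I_re, Complex.I_im, Complex.neg_re, Complex.one_re, him] at hre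
  norm_num at hre

theorem iX_ne_zero : iX ≠ 0 := by
  intro h
  have := congrArg (fun f : Rsub ↦ PowerSeries.coeff 1 f.1) h
  simp [iX] at this

theorem span_C_iX_C_negX_ne_top :
    Ideal.span {C iX, C negX} ≠ (⊤ : Ideal (MvPolynomial (Fin 2) Rsub)) := by
  let φ : MvPolynomial (Fin 2) Rsub →+* ℂ :=
    PowerSeries.constantCoeff.comp (Rsub.val.toRingHom.comp constantCoeff)
  refine ne_top_of_le_ne_top (RingHom.ker_ne_top φ) (Ideal.span_le.2 ?_)
  rintro _ (rfl | rfl) <;> simp [φ, iX, negX]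

theorem Dder_X (i : Fin 2) : Dder (X i) = ![C iX, C negX] i :=
  mkDerivation_X _ _ i

theorem Dder_iterate_X (i : Fin 2) : Dder^[2] (X i) = 0 := by
  rw [Function.iterate_succ_apply', Function.iterate_one, Dder_X]
  fin_cases i <;> exact derivation_C _ _

theorem span_range_Dder : Ideal.span (Set.range Dder) = Ideal.span {C iX, C negX} := by
  rw [span_range_derivation, ← Matrix.range_cons_cons_empty (C iX) (C negX) ![]]
  exact congrArg (Ideal.span ∘ Set.range) (funext Dder_X)

/-- The Bhatwadekar–Dutta example: `D` is a locally nilpotent `R`-derivation of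
`B = R[Y,Z]`, the ideal `D(B)B` equals `(iX, -X)B`, it is a proper ideal of `B`, and its
grade on `B` is `1`. -/
theorem bhatwadekar_dutta_example :
    (∀ b, ∃ n : ℕ, (Dder.toLinearMap ^ n) b = 0) ∧
      (Ideal.span (Set.range (Dder : MvPolynomial (Fin 2) Rsub → MvPolynomial (Fin 2) Rsub)) =
        Ideal.span ({MvPolynomial.C iX, MvPolynomial.C negX} : Set (MvPolynomial (Fin 2) Rsub))) ∧
      Ideal.span (Set.range (Dder : MvPolynomial (Fin 2) Rsub → MvPolynomial (Fin 2) Rsub)) ≠ ⊤ ∧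
      Ideal.grade (S := MvPolynomial (Fin 2) Rsub)
        (Ideal.span (Set.range (Dder : MvPolynomial (Fin 2) Rsub → MvPolynomial (Fin 2) Rsub)))
        = 1 := by
  refine ⟨fun b ↦ ?_, span_range_Dder, span_range_Dder ▸ span_C_iX_C_negX_ne_top, ?_⟩
  · simpa only [Module.End.pow_apply, Derivation.coeFn_coe] using
      exists_iterate_derivation_eq_zero Dder (fun i ↦ ⟨2, Dder_iterate_X i⟩) b
  have hsq : (C iX : MvPolynomial (Fin 2) Rsub) ^ 2 + C negX ^ 2 = 0 := by
    rw [← map_pow, ← map_pow, ← map_add, iX_sq_add_negX_sq, map_zero]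
  have hdvd : ¬ (C iX : MvPolynomial (Fin 2) Rsub) ∣ C negX := fun h ↦
    not_iX_dvd_negX (by simpa using (C_dvd_iff_dvd_coeff _ _).1 h 0)
  have hreg : IsSMulRegular (MvPolynomial (Fin 2) Rsub) (C iX : MvPolynomial (Fin 2) Rsub) :=
    (IsRegular.of_ne_zero (C_ne_zero.2 iX_ne_zero)).left.isSMulRegular
  rw [span_range_Dder]
  exact Ideal.grade_span_pair_eq_one_of_sq_add_sq_eq_zero hsq hdvd hreg span_C_iX_C_negX_ne_top

end
end

section
/- Let R be a ring that is a retract of a ring B: there is a ring homomorphism φ : B → R with φ|_R = id_R. If B is a unique factorization domain, then R is a unique factorization domain. -/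
/-!
Let `f : R → B` have a left inverse `g : B → R`, both multiplicative. Then `f` reflects units
and nonzero elements, so strict divisibility chains in `R` map to strict divisibility chains in
`B` and the divisibility order of `R` is well founded. For an irreducible `p : R`, some prime
factor `q` of `f p` has `g q` a nonunit (the `g q` multiply to an associate of `p = g (f p)`);
since `g q ∣ p`, irreducibility gives `p ∣ g q`. Then `p ∣ a * b` gives `q ∣ f a * f b`, say
`q ∣ f a`, hence `p ∣ g q ∣ g (f a) = a`: irreducibles of `R` are prime.
-/

section Retract

open Function UniqueFactorizationMonoid

variable {R B F G : Type*} [CommMonoidWithZero R] [CommMonoidWithZero B]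
  [FunLike F R B] [FunLike G B R] {f : F} (g : G)

theorem DvdNotUnit.map_of_leftInverse [MonoidWithZeroHomClass F R B] [MonoidHomClass G B R]
    (hfg : LeftInverse g f) {a b : R} (h : DvdNotUnit a b) : DvdNotUnit (f a) (f b) := by
  obtain ⟨ha, x, hx, rfl⟩ := h
  exact ⟨(map_ne_zero_iff f hfg.injective).mpr ha, f x,
    fun hfx => hx ((isUnit_map_of_leftInverse g hfg).mp hfx), map_mul f a x⟩

theorem WfDvdMonoid.of_leftInverse [MonoidWithZeroHomClass F R B] [MonoidHomClass G B R]
    [WfDvdMonoid B] (hfg : LeftInverse g f) : WfDvdMonoid R :=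
  ⟨Subrelation.wf (fun h => h.map_of_leftInverse g hfg) (InvImage.wf f wellFounded_dvdNotUnit)⟩

theorem dvd_of_dvd_map_of_leftInverse [MonoidHomClass G B R] (hfg : LeftInverse g f) {q : B}
    {a : R} (h : q ∣ f a) : g q ∣ a := by
  simpa only [hfg a] using map_dvd g h

theorem Irreducible.exists_prime_dvd_map_of_leftInverse [MonoidWithZeroHomClass F R B]
    [MonoidHomClass G B R] [UniqueFactorizationMonoid B] (hfg : LeftInverse g f) {p : R}
    (hp : Irreducible p) : ∃ q : B, Prime q ∧ q ∣ f p ∧ p ∣ g q := by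
  obtain ⟨s, hs_prime, hs⟩ :=
    exists_prime_factors (f p) ((map_ne_zero_iff f hfg.injective).mpr hp.ne_zero)
  have hs_map : Associated (s.map g).prod p := by
    simpa only [map_multiset_prod, hfg p] using hs.map g
  obtain ⟨q, hqs, hq_unit⟩ : ∃ q ∈ s, ¬IsUnit (g q) := by
    by_contra! h
    refine hp.not_isUnit (hs_map.isUnit ?_)
    exact Multiset.prod_induction _ _ (fun _ _ => IsUnit.mul) isUnit_one
      (by simpa only [Multiset.forall_mem_map_iff] using h)
  have hq_dvd : q ∣ f p := (Multiset.dvd_prod hqs).trans hs.dvd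
  have hgq_dvd : g q ∣ p := dvd_of_dvd_map_of_leftInverse g hfg hq_dvd
  exact ⟨q, hs_prime q hqs, hq_dvd, ((hp.dvd_iff.mp hgq_dvd).resolve_left hq_unit).dvd⟩

theorem Irreducible.prime_of_leftInverse [MonoidWithZeroHomClass F R B] [MonoidHomClass G B R]
    [UniqueFactorizationMonoid B] (hfg : LeftInverse g f) {p : R} (hp : Irreducible p) :
    Prime p := by
  obtain ⟨q, hq, hqp, hpq⟩ := hp.exists_prime_dvd_map_of_leftInverse g hfg
  refine ⟨hp.ne_zero, hp.not_isUnit, fun a b hab => ?_⟩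
  have hq_dvd : q ∣ f a * f b := hqp.trans (map_mul f a b ▸ map_dvd f hab)
  exact (hq.dvd_or_dvd hq_dvd).imp
    (fun h => hpq.trans (dvd_of_dvd_map_of_leftInverse g hfg h))
    (fun h => hpq.trans (dvd_of_dvd_map_of_leftInverse g hfg h))

theorem UniqueFactorizationMonoid.of_leftInverse [MonoidWithZeroHomClass F R B]
    [MonoidHomClass G B R] [UniqueFactorizationMonoid B] (hfg : LeftInverse g f) :
    UniqueFactorizationMonoid R :=
  have : IsCancelMulZero R := hfg.injective.isCancelMulZero f (map_zero f) (map_mul f)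
  { WfDvdMonoid.of_leftInverse g hfg with
    irreducible_iff_prime := ⟨fun hp => hp.prime_of_leftInverse g hfg, Prime.irreducible⟩ }

end Retract

theorem retract_of_UFD_is_UFD_general {B : Type*} [CommRing B]
    [UniqueFactorizationMonoid B] (R : Subring B) (φ : B →+* R)
    (hφ : ∀ r : R, φ (r : B) = r) :
    UniqueFactorizationMonoid R :=
  UniqueFactorizationMonoid.of_leftInverse (f := R.subtype) φ hφ

/-- If `R` is a subring of `B` which is a retract of `B` (there is a ring homomorphism
`φ : B → R` restricting to the identity on `R`) and `B` is a UFD, then `R` is a UFD. -/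
theorem retract_of_UFD_is_UFD {B : Type*} [CommRing B] [IsDomain B]
    [UniqueFactorizationMonoid B] (R : Subring B) (φ : B →+* R)
    (hφ : ∀ r : R, φ (r : B) = r) :
    UniqueFactorizationMonoid R :=
  retract_of_UFD_is_UFD_general R φ hφ
end

section
/- Let R be a Noetherian domain, A a subring of B containing R where B is a finitely generated R-algebra, and suppose A_b is a finitely generated R-algebra for some nonzero b ∈ A. If A_𝔪 is a finitely generated R_𝔪-algebra for every maximal ideal 𝔪 of R, then A is a finitely generated R-algebra. -/
/-!
A finite generating set of `A_b` yields a finitely generated `A₁ ⊆ A` containing `b` with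
`A ⊆ ⋃ₙ b⁻ⁿ A₁`, and for every maximal ideal `𝔪` a finite generating set of `A_𝔪` yields a
finitely generated `H ⊆ A` with `A ⊆ ⋃_{s ∉ 𝔪} s⁻¹ H`. In the Noetherian ring `A₀ = A₁[H]` the
colon ideals `(b A₀ : s)`, `s ∉ 𝔪`, have a maximal member `(b A₀ : f)`, which then contains all
of them; since `b` is a nonzerodivisor this gives `A ⊆ ⋃ₙ f⁻ⁿ A₀` for a single `f ∉ 𝔪`.
These `f` generate the unit ideal of `R`, and finitely many of them, together with their
subalgebras `A₀`, generate `A`.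
-/

theorem Ideal.exists_mem_forall_colon_le {A : Type*} [CommRing A] [IsNoetherianRing A]
    (I : Ideal A) (S : Submonoid A) : ∃ g ∈ S, ∀ s ∈ S, I.colon {s} ≤ I.colon {g} := by
  obtain ⟨_, ⟨g, hg, rfl⟩, hmax⟩ := set_has_maximal_iff_noetherian.mpr ‹IsNoetherianRing A›
    ((fun g => I.colon {g}) '' S) ⟨_, Set.mem_image_of_mem _ S.one_mem⟩
  have hmono (x y : A) : I.colon {x} ≤ I.colon {y * x} := fun r hr => by
    rw [Submodule.mem_colon_singleton, smul_eq_mul] at hr ⊢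
    rw [mul_left_comm]
    exact I.mul_mem_left y hr
  refine ⟨g, hg, fun s hs => ?_⟩
  rw [(hmono g s).eq_of_not_lt (hmax _ ⟨s * g, mul_mem hs hg, rfl⟩), mul_comm]
  exact hmono s g

section

variable {R A : Type*} [CommRing R] [CommRing A] [Algebra R A]

theorem Algebra.FiniteType.of_span_eq_top_of_pow_smul_mem (s : Set R) (hs : Ideal.span s = ⊤)
    (h : ∀ r ∈ s, ∃ A₀ : Subalgebra R A, A₀.FG ∧ ∀ a : A, ∃ n : ℕ, r ^ n • a ∈ A₀) :
    Algebra.FiniteType R A := by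
  classical
  obtain ⟨t, hts, ht⟩ := (Ideal.span_eq_top_iff_finite s).mp hs
  choose! A₀ hA₀ hpow using h
  choose! T hT using fun r hr => hA₀ r (hts hr)
  refine ⟨⟨t.biUnion T, Algebra.eq_top_iff.mpr fun a => ?_⟩⟩
  rw [← Subalgebra.mem_toSubmodule]
  refine Submodule.mem_of_span_eq_top_of_smul_pow_mem (Subalgebra.toSubmodule _) _ ht a
    fun r => ?_
  obtain ⟨n, hn⟩ := hpow r (hts r.2) a
  rw [← hT r r.2] at hn
  exact ⟨n, Algebra.adjoin_mono (Finset.coe_subset.mpr (Finset.subset_biUnion_of_mem T r.2)) hn⟩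

theorem exists_fg_pow_mul_mem_of_finiteType_away (b : A) (A' : Type*) [CommRing A']
    [Algebra A A'] [Algebra R A'] [IsScalarTower R A A'] [IsLocalization.Away b A']
    [Algebra.FiniteType R A'] :
    ∃ A₁ : Subalgebra R A, A₁.FG ∧ b ∈ A₁ ∧ ∀ a : A, ∃ n : ℕ, b ^ n * a ∈ A₁ := by
  classical
  obtain ⟨s, hs⟩ := ‹Algebra.FiniteType R A'›.out
  let T := insert b (IsLocalization.finsetIntegerMultiple (Submonoid.powers b) s)
  have hbT : b ∈ Algebra.adjoin R (T : Set A) := Algebra.subset_adjoin (by simp [T])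
  refine ⟨Algebra.adjoin R T, ⟨T, rfl⟩, hbT, fun a => ?_⟩
  obtain ⟨⟨_, n, rfl⟩, hn⟩ := IsLocalization.exists_smul_mem_of_mem_adjoin (Submonoid.powers b)
    a s (Algebra.adjoin R T) (fun x hx => Algebra.subset_adjoin (by simp [T, hx]))
    (Submonoid.powers_le.mpr hbT) (hs ▸ Algebra.mem_top)
  exact ⟨n, hn⟩

theorem exists_fg_smul_mem_of_finiteType_localization (M : Submonoid R) (R' A' : Type*)
    [CommRing R'] [CommRing A'] [Algebra R R'] [IsLocalization M R'] [Algebra A A'] [Algebra R A']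
    [IsScalarTower R A A'] [IsLocalization (M.map (algebraMap R A)) A'] [Algebra R' A']
    [IsScalarTower R R' A'] [Algebra.FiniteType R' A'] :
    ∃ A₀ : Subalgebra R A, A₀.FG ∧ ∀ a : A, ∃ m : M, m • a ∈ A₀ := by
  classical
  obtain ⟨s, hs⟩ := ‹Algebra.FiniteType R' A'›.out
  refine ⟨_, ⟨IsLocalization.finsetIntegerMultiple (M.map (algebraMap R A)) s, rfl⟩, fun a => ?_⟩
  obtain ⟨m, hm⟩ := multiple_mem_adjoin_of_mem_localization_adjoin M R' (s : Set A')
    (algebraMap A A' a) (hs ▸ Algebra.mem_top)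
  rw [Submonoid.smul_def, ← IsScalarTower.coe_toAlgHom' R A A', ← map_smul,
    IsScalarTower.coe_toAlgHom', ← Submonoid.smul_def] at hm
  obtain ⟨m', hm'⟩ := IsLocalization.lift_mem_adjoin_finsetIntegerMultiple M _ s hm
  exact ⟨m' * m, by rwa [mul_smul]⟩

theorem exists_mem_pow_smul_mem_of_forall_smul_mem [IsDomain A] (M : Submonoid R)
    (A₀ : Subalgebra R A) [IsNoetherianRing A₀] {b : A} (hb₀ : b ∈ A₀) (hb : b ≠ 0)
    (hpow : ∀ a : A, ∃ n : ℕ, b ^ n * a ∈ A₀) (hM : ∀ a : A, ∃ m : M, m • a ∈ A₀) :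
    ∃ r ∈ M, ∀ a : A, ∃ n : ℕ, r ^ n • a ∈ A₀ := by
  set I := Ideal.span {(⟨b, hb₀⟩ : A₀)}
  obtain ⟨_, ⟨r, hr, rfl⟩, hcolon⟩ := I.exists_mem_forall_colon_le (M.map (algebraMap R A₀))
  have hstep (a : A) (hba : b * a ∈ A₀) : r • a ∈ A₀ := by
    obtain ⟨m, hm⟩ := hM a
    have hmem : (⟨b * a, hba⟩ : A₀) ∈ I.colon {algebraMap R A₀ m} := by
      refine Submodule.mem_colon_singleton.mpr (Ideal.mem_span_singleton'.mpr ⟨⟨m • a, hm⟩, ?_⟩)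
      ext
      rw [smul_eq_mul]
      simp only [Subalgebra.coe_mul, Subalgebra.coe_algebraMap, Submonoid.smul_def,
        Algebra.smul_def]
      ring
    obtain ⟨z, hz⟩ := Ideal.mem_span_singleton'.mp
      (Submodule.mem_colon_singleton.mp (hcolon _ ⟨m, m.2, rfl⟩ hmem))
    have hcancel : b * (r • a) = b * z := by
      rw [smul_eq_mul] at hz
      have hval := congrArg Subtype.val hz
      simp only [Subalgebra.coe_mul, Subalgebra.coe_algebraMap, Algebra.smul_def] at hval ⊢
      linear_combination -hval
    exact mul_left_cancel₀ hb hcancel ▸ z.2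
  have hpow_step (n : ℕ) : ∀ a : A, b ^ n * a ∈ A₀ → r ^ n • a ∈ A₀ := by
    induction n with
    | zero => simp
    | succ n ih =>
      intro a ha
      rw [pow_succ, mul_smul]
      apply ih
      rw [mul_smul_comm]
      apply hstep
      rwa [← mul_assoc, ← pow_succ']
  exact ⟨r, hr, fun a => (hpow a).imp fun n => hpow_step n a⟩

theorem exists_mem_pow_smul_mem_of_finiteType_localization [IsNoetherianRing R] [IsDomain A]
    {A₁ : Subalgebra R A} (hA₁ : A₁.FG) {b : A} (hb₁ : b ∈ A₁) (hb : b ≠ 0)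
    (hpow : ∀ a : A, ∃ n : ℕ, b ^ n * a ∈ A₁) (M : Submonoid R) (R' A' : Type*)
    [CommRing R'] [CommRing A'] [Algebra R R'] [IsLocalization M R'] [Algebra A A'] [Algebra R A']
    [IsScalarTower R A A'] [IsLocalization (M.map (algebraMap R A)) A'] [Algebra R' A']
    [IsScalarTower R R' A'] [Algebra.FiniteType R' A'] :
    ∃ r ∈ M, ∃ A₀ : Subalgebra R A, A₀.FG ∧ ∀ a : A, ∃ n : ℕ, r ^ n • a ∈ A₀ := by
  obtain ⟨H, hH, hM⟩ := exists_fg_smul_mem_of_finiteType_localization (A := A) M R' A'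
  have : Algebra.FiniteType R ↥(A₁ ⊔ H) := (Subalgebra.fg_iff_finiteType _).mp (hA₁.sup hH)
  have : IsNoetherianRing ↥(A₁ ⊔ H) := Algebra.FiniteType.isNoetherianRing R _
  obtain ⟨r, hr, hr₀⟩ := exists_mem_pow_smul_mem_of_forall_smul_mem M (A₁ ⊔ H)
    (le_sup_left (a := A₁) hb₁) hb (fun a => (hpow a).imp fun _ h => le_sup_left (a := A₁) h)
    (fun a => (hM a).imp fun _ h => le_sup_right (b := H) h)
  exact ⟨r, hr, A₁ ⊔ H, hA₁.sup hH, hr₀⟩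

end

theorem onoda_finite_generation_general {R A : Type*} [CommRing R]
    [IsNoetherianRing R] [CommRing A] [IsDomain A] [Algebra R A]
    (b : A) (hb : b ≠ 0) (hAb : Algebra.FiniteType R (Localization.Away b))
    (hloc : ∀ (𝔪 : Ideal R) (h𝔪 : 𝔪.IsMaximal),
      letI := h𝔪.isPrime
      letI : Algebra (Localization.AtPrime 𝔪)
          (Localization (Submonoid.map (algebraMap R A) 𝔪.primeCompl)) :=
        (IsLocalization.map
          (Localization (Submonoid.map (algebraMap R A) 𝔪.primeCompl))
          (algebraMap R A) (Submonoid.le_comap_map 𝔪.primeCompl) :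
            Localization.AtPrime 𝔪 →+*
              Localization (Submonoid.map (algebraMap R A) 𝔪.primeCompl)).toAlgebra
      Algebra.FiniteType (Localization.AtPrime 𝔪)
        (Localization (Submonoid.map (algebraMap R A) 𝔪.primeCompl))) :
    Algebra.FiniteType R A := by
  obtain ⟨A₁, hA₁, hb₁, hpow⟩ :=
    exists_fg_pow_mul_mem_of_finiteType_away (R := R) b (Localization.Away b)
  refine Algebra.FiniteType.of_span_eq_top_of_pow_smul_mem
    {r | ∃ A₀ : Subalgebra R A, A₀.FG ∧ ∀ a : A, ∃ n : ℕ, r ^ n • a ∈ A₀} ?_ fun r hr => hr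
  by_contra hne
  obtain ⟨𝔪, h𝔪, hle⟩ := Ideal.exists_le_maximal _ hne
  let L := Localization (𝔪.primeCompl.map (algebraMap R A))
  let : Algebra (Localization.AtPrime 𝔪) L :=
    (IsLocalization.map L (algebraMap R A) (Submonoid.le_comap_map 𝔪.primeCompl)).toAlgebra
  have : IsScalarTower R (Localization.AtPrime 𝔪) L := .of_algebraMap_eq'
    ((IsLocalization.map_comp _).trans (IsScalarTower.algebraMap_eq R A L).symm).symm
  have := hloc 𝔪 h𝔪
  obtain ⟨r, hr𝔪, hr⟩ := exists_mem_pow_smul_mem_of_finiteType_localization hA₁ hb₁ hb hpow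
    𝔪.primeCompl (Localization.AtPrime 𝔪) L
  exact hr𝔪 (hle (Ideal.subset_span hr))

/-- Onoda's theorem: let `R` be a Noetherian domain and `A` an overdomain of `R` contained
in a finitely generated `R`-algebra `B`, such that `A_b` is a finitely generated
`R`-algebra for some nonzero `b ∈ A`. If `A_𝔪 = A ⊗_R R_𝔪` is a finitely generated
`R_𝔪`-algebra for every maximal ideal `𝔪` of `R`, then `A` is a finitely generated
`R`-algebra. -/
theorem onoda_finite_generation {R A B : Type*} [CommRing R] [IsDomain R]
    [IsNoetherianRing R] [CommRing A] [IsDomain A] [Algebra R A]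
    (hRA : Function.Injective (algebraMap R A))
    [CommRing B] [Algebra R B] [Algebra A B] [IsScalarTower R A B]
    (hAB : Function.Injective (algebraMap A B)) (hB : Algebra.FiniteType R B)
    (b : A) (hb : b ≠ 0) (hAb : Algebra.FiniteType R (Localization.Away b))
    (hloc : ∀ (𝔪 : Ideal R) (h𝔪 : 𝔪.IsMaximal),
      letI := h𝔪.isPrime
      letI : Algebra (Localization.AtPrime 𝔪)
          (Localization (Submonoid.map (algebraMap R A) 𝔪.primeCompl)) :=
        (IsLocalization.map
          (Localization (Submonoid.map (algebraMap R A) 𝔪.primeCompl))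
          (algebraMap R A) (Submonoid.le_comap_map 𝔪.primeCompl) :
            Localization.AtPrime 𝔪 →+*
              Localization (Submonoid.map (algebraMap R A) 𝔪.primeCompl)).toAlgebra
      Algebra.FiniteType (Localization.AtPrime 𝔪)
        (Localization (Submonoid.map (algebraMap R A) 𝔪.primeCompl))) :
    Algebra.FiniteType R A :=
  onoda_finite_generation_general b hb hAb hloc
end
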